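/- arXiv:1906.09837 — 3 statements merged into one kernel-verified Lean document; each statement's English description precedes it below -/
import Mathlib

section
/- Let Ω ⊂ ℝⁿ (n ≥ 2) be a bounded domain, let μ be a finite Borel measure on ℝⁿ supported in Ω, let σ ∈ (0,n), α ∈ (0, n−σ), and let 1 ≤ p < 1 + α/(n−σ−α). Then the capped fractional maximal function M_α^σ μ belongs to L^p(Ω), i.e. ∫_Ω (M_α^σ μ(x))^p dx < ∞. -/
noncomputable section
open MeasureTheory Metric Set Filter
open scoped ENNReal Topology NNReal

abbrev Euc (n : ℕ) := EuclideanSpace ℝ (Fin n)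

/-- The capped fractional maximal function of a measure `μ`, with radii up to `D`. -/
def cappedFracMaximal {n : ℕ} (D : ℝ) (μ : Measure (Euc n)) (σ α : ℝ) (x : Euc n) :
    ℝ≥0∞ :=
  ⨆ r ∈ Set.Ioc (0 : ℝ) D,
    min (μ (ball x r)) (ENNReal.ofReal (r ^ σ)) / (volume (ball x r)) ^ (1 - α / n)

private lemma ennrpow_anti {a b : ℝ≥0∞} {c : ℝ} (hc : c ≤ 0) (hab : a ≤ b) :
    b ^ c ≤ a ^ c := by
  have h := ENNReal.inv_le_inv.mpr (ENNReal.rpow_le_rpow hab (neg_nonneg.mpr hc))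
  rwa [← ENNReal.rpow_neg, ← ENNReal.rpow_neg, neg_neg] at h

/-- Uniform bound for the Riesz kernel integral over a bounded set. -/
private lemma kernel_bound (n : ℕ) (hn : 1 ≤ n) (Ω : Set (Euc n))
    (hΩm : MeasurableSet Ω) (hΩbdd : Bornology.IsBounded Ω)
    (β : ℝ) (hβ0 : 0 < β) (hβn : β < n) :
    ∃ C : ℝ≥0∞, C < ⊤ ∧ ∀ y : Euc n,
      ∫⁻ x in Ω, (ENNReal.ofReal ‖x - y‖) ^ (β - (n : ℝ)) ≤ C := by
  haveI : Nonempty (Fin n) := ⟨⟨0, by omega⟩⟩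
  haveI : Nontrivial (Euc n) := inferInstance
  set v1 : ℝ≥0∞ := volume (ball (0 : Euc n) 1) with hv1
  set q : ℝ := (2 : ℝ) ^ (-β) with hq
  have hq0 : 0 ≤ q := Real.rpow_nonneg (by norm_num) _
  have hq1 : q < 1 := Real.rpow_lt_one_of_one_lt_of_neg one_lt_two (by linarith)
  have hgeo : (1 - ENNReal.ofReal q)⁻¹ < ⊤ := by
    rw [ENNReal.inv_lt_top]
    exact tsub_pos_of_lt (ENNReal.ofReal_lt_one.mpr hq1)
  have hβn' : β - (n : ℝ) ≤ 0 := by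
    have : β < (n : ℝ) := hβn
    linarith
  refine ⟨volume Ω + ENNReal.ofReal ((2 : ℝ) ^ ((n : ℝ) - β)) * v1 *
      (1 - ENNReal.ofReal q)⁻¹, ?_, ?_⟩
  · exact ENNReal.add_lt_top.mpr ⟨hΩbdd.measure_lt_top,
      ENNReal.mul_lt_top (ENNReal.mul_lt_top ENNReal.ofReal_lt_top measure_ball_lt_top) hgeo⟩
  intro y
  set f : Euc n → ℝ≥0∞ := fun x => (ENNReal.ofReal ‖x - y‖) ^ (β - (n : ℝ)) with hf
  -- far part
  have hfar : ∫⁻ x in Ω \ ball y 1, f x ≤ volume Ω := by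
    calc ∫⁻ x in Ω \ ball y 1, f x ≤ ∫⁻ _ in Ω \ ball y 1, (1 : ℝ≥0∞) := by
          refine lintegral_mono_ae ?_
          filter_upwards [ae_restrict_mem (hΩm.diff measurableSet_ball)] with x hx
          have h1 : (1 : ℝ) ≤ ‖x - y‖ := by
            have := hx.2
            rw [mem_ball, dist_eq_norm, not_lt] at this
            exact this
          calc f x ≤ (1 : ℝ≥0∞) ^ (β - (n : ℝ)) :=
                ennrpow_anti hβn' (by simpa using ENNReal.one_le_ofReal.mpr h1)
            _ = 1 := ENNReal.one_rpow _
      _ = volume (Ω \ ball y 1) := setLIntegral_one _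
      _ ≤ volume Ω := measure_mono diff_subset
  -- annuli
  set B : ℕ → Set (Euc n) := fun k =>
    {x | (2 : ℝ) ^ (-(k : ℝ) - 1) ≤ ‖x - y‖ ∧ ‖x - y‖ < (2 : ℝ) ^ (-(k : ℝ))} with hB
  have hcover : ball y 1 ⊆ {y} ∪ ⋃ k, B k := by
    intro x hx
    rcases eq_or_ne x y with h | h
    · exact Or.inl (by simp [h])
    right
    have hpos : 0 < ‖x - y‖ := by
      rw [norm_pos_iff]
      exact sub_ne_zero.mpr h
    obtain ⟨m, hm1, hm2⟩ := exists_mem_Ico_zpow hpos one_lt_two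
    have hlt1 : ‖x - y‖ < 1 := by rw [mem_ball, dist_eq_norm] at hx; exact hx
    have hm0 : (2 : ℝ) ^ m < 1 := lt_of_le_of_lt hm1 hlt1
    have hmneg : m < 0 := by
      by_contra hc
      push_neg at hc
      have : (1 : ℝ) ≤ 2 ^ m := one_le_zpow₀ (by norm_num) hc
      linarith
    refine mem_iUnion.mpr ⟨(-(m + 1)).toNat, ?_⟩
    have hkZ : (((-(m + 1)).toNat : ℤ)) = -(m + 1) := Int.toNat_of_nonneg (by omega)
    have hkR : (((-(m + 1)).toNat : ℕ) : ℝ) = -(m : ℝ) - 1 := by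
      have := congrArg (fun z : ℤ => (z : ℝ)) hkZ
      push_cast at this
      linarith [this]
    have e1 : (2 : ℝ) ^ (-(((-(m + 1)).toNat : ℕ) : ℝ) - 1) = (2 : ℝ) ^ m := by
      rw [hkR, show -(-(m : ℝ) - 1) - 1 = ((m : ℤ) : ℝ) by push_cast; ring]
      exact Real.rpow_intCast 2 m
    have e2 : (2 : ℝ) ^ (-(((-(m + 1)).toNat : ℕ) : ℝ)) = (2 : ℝ) ^ (m + 1) := by
      rw [hkR, show -(-(m : ℝ) - 1) = (((m + 1) : ℤ) : ℝ) by push_cast; ring]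
      exact Real.rpow_intCast 2 (m + 1)
    exact ⟨e1 ▸ hm1, e2 ▸ hm2⟩
  have hterm : ∀ k : ℕ, ∫⁻ x in B k, f x ≤
      ENNReal.ofReal ((2 : ℝ) ^ ((n : ℝ) - β)) * ENNReal.ofReal q ^ k * v1 := by
    intro k
    have hBmeas : MeasurableSet (B k) := by
      have : B k = (fun x => ‖x - y‖) ⁻¹'
          (Ico ((2 : ℝ) ^ (-(k : ℝ) - 1)) ((2 : ℝ) ^ (-(k : ℝ)))) := rfl
      rw [this]
      exact ((measurable_id.sub_const y).norm) measurableSet_Ico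
    have key : (2 : ℝ) ^ ((-(k : ℝ) - 1) * (β - (n : ℝ))) * ((2 : ℝ) ^ (-(k : ℝ))) ^ (n : ℕ)
        = (2 : ℝ) ^ ((n : ℝ) - β) * q ^ k := by
      rw [hq, ← Real.rpow_natCast ((2 : ℝ) ^ (-(k : ℝ))) n,
        ← Real.rpow_natCast ((2 : ℝ) ^ (-β)) k,
        ← Real.rpow_mul (by norm_num : (0:ℝ) ≤ 2),
        ← Real.rpow_mul (by norm_num : (0:ℝ) ≤ 2),
        ← Real.rpow_add two_pos, ← Real.rpow_add two_pos]
      congr 1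
      ring
    calc ∫⁻ x in B k, f x
        ≤ ∫⁻ _ in B k, ENNReal.ofReal ((2 : ℝ) ^ ((-(k : ℝ) - 1) * (β - (n : ℝ)))) := by
          refine lintegral_mono_ae ?_
          filter_upwards [ae_restrict_mem hBmeas] with x hx
          calc f x ≤ (ENNReal.ofReal ((2 : ℝ) ^ (-(k : ℝ) - 1))) ^ (β - (n : ℝ)) :=
                ennrpow_anti hβn' (ENNReal.ofReal_le_ofReal hx.1)
            _ = ENNReal.ofReal ((2 : ℝ) ^ ((-(k : ℝ) - 1) * (β - (n : ℝ)))) := by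
                rw [ENNReal.ofReal_rpow_of_pos (Real.rpow_pos_of_pos two_pos _),
                  ← Real.rpow_mul (by norm_num : (0:ℝ) ≤ 2)]
      _ = ENNReal.ofReal ((2 : ℝ) ^ ((-(k : ℝ) - 1) * (β - (n : ℝ)))) * volume (B k) :=
          setLIntegral_const _ _
      _ ≤ ENNReal.ofReal ((2 : ℝ) ^ ((-(k : ℝ) - 1) * (β - (n : ℝ)))) *
            volume (ball y ((2 : ℝ) ^ (-(k : ℝ)))) := by
          gcongr
          intro x hx
          rw [mem_ball, dist_eq_norm]
          exact hx.2
      _ = ENNReal.ofReal ((2 : ℝ) ^ ((-(k : ℝ) - 1) * (β - (n : ℝ)))) *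
            (ENNReal.ofReal (((2 : ℝ) ^ (-(k : ℝ))) ^ (n : ℕ)) * v1) := by
          rw [Measure.addHaar_ball volume y (Real.rpow_nonneg (by norm_num) _),
            finrank_euclideanSpace_fin]
      _ = ENNReal.ofReal ((2 : ℝ) ^ ((n : ℝ) - β)) * ENNReal.ofReal q ^ k * v1 := by
          rw [← mul_assoc, ← ENNReal.ofReal_mul (Real.rpow_nonneg (by norm_num) _), key,
            ENNReal.ofReal_mul (Real.rpow_nonneg (by norm_num) _), ENNReal.ofReal_pow hq0]
  have hnear : ∫⁻ x in ball y 1, f x ≤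
      ENNReal.ofReal ((2 : ℝ) ^ ((n : ℝ) - β)) * v1 * (1 - ENNReal.ofReal q)⁻¹ := by
    calc ∫⁻ x in ball y 1, f x ≤ ∫⁻ x in {y} ∪ ⋃ k, B k, f x := lintegral_mono_set hcover
      _ ≤ (∫⁻ x in ({y} : Set (Euc n)), f x) + ∫⁻ x in ⋃ k, B k, f x := lintegral_union_le _ _ _
      _ ≤ (0:ℝ≥0∞) + ∑' k, ∫⁻ x in B k, f x := by
          gcongr
          · exact le_of_eq (setLIntegral_measure_zero _ _ (measure_singleton y))
          · exact lintegral_iUnion_le _ _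
      _ ≤ 0 + ∑' k, ENNReal.ofReal ((2 : ℝ) ^ ((n : ℝ) - β)) * ENNReal.ofReal q ^ k * v1 := by
          gcongr with k
          exact hterm k
      _ = ENNReal.ofReal ((2 : ℝ) ^ ((n : ℝ) - β)) * v1 * (1 - ENNReal.ofReal q)⁻¹ := by
          rw [zero_add]
          have : ∀ k : ℕ, ENNReal.ofReal ((2 : ℝ) ^ ((n : ℝ) - β)) * ENNReal.ofReal q ^ k * v1
              = (ENNReal.ofReal ((2 : ℝ) ^ ((n : ℝ) - β)) * v1) * ENNReal.ofReal q ^ k := by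
            intro k; ring
          rw [tsum_congr this, ENNReal.tsum_mul_left, ENNReal.tsum_geometric, mul_assoc]
  calc ∫⁻ x in Ω, f x ≤ ∫⁻ x in (Ω \ ball y 1) ∪ ball y 1, f x := by
        refine lintegral_mono_set ?_
        intro x hx
        by_cases h : x ∈ ball y 1
        · exact Or.inr h
        · exact Or.inl ⟨hx, h⟩
    _ ≤ (∫⁻ x in Ω \ ball y 1, f x) + ∫⁻ x in ball y 1, f x := lintegral_union_le _ _ _
    _ ≤ volume Ω + ENNReal.ofReal ((2 : ℝ) ^ ((n : ℝ) - β)) * v1 * (1 - ENNReal.ofReal q)⁻¹ :=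
        add_le_add hfar hnear

/-- the capped fractional maximal function of a finite measure supported in a
bounded domain `Ω` is in `L^p(Ω)` for `p < 1 + α/(n-σ-α)`. -/
theorem cappedFracMaximal_lintegral_lt_top
    (n : ℕ) (hn : 2 ≤ n) (Ω : Set (Euc n)) (hΩopen : IsOpen Ω)
    (hΩbdd : Bornology.IsBounded Ω) (hΩconn : IsConnected Ω)
    (μ : Measure (Euc n)) [IsFiniteMeasure μ] (hμ : μ Ωᶜ = 0)
    (σ α : ℝ) (hσ : σ ∈ Set.Ioo (0 : ℝ) n) (hα : α ∈ Set.Ioo (0 : ℝ) (n - σ))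
    (p : ℝ) (hp1 : 1 ≤ p) (hp : p < 1 + α / (n - σ - α)) :
    ∫⁻ x in Ω, (cappedFracMaximal (Metric.diam Ω) μ σ α x) ^ p < ∞ := by
  haveI : Nonempty (Fin n) := ⟨⟨0, by omega⟩⟩
  haveI : Nontrivial (Euc n) := inferInstance
  obtain ⟨hσ0, hσn⟩ := hσ
  obtain ⟨hα0, hαn⟩ := hα
  have hn2 : (2 : ℝ) ≤ (n : ℝ) := by exact_mod_cast hn
  have hp0 : (0 : ℝ) < p := lt_of_lt_of_le one_pos hp1
  have hd : (0 : ℝ) < (n : ℝ) - σ - α := by linarith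
  -- exponents
  obtain ⟨s, t, β, hs0, ht0, hst, hsp, hβ0, hβn, hkey⟩ :
      ∃ s t β : ℝ, 0 < s ∧ 0 ≤ t ∧ s + t = 1 ∧ s * p = 1 ∧ 0 < β ∧ β < (n : ℝ) ∧
        (β - (n : ℝ)) * s = σ * t - (n : ℝ) + α := by
    refine ⟨1 / p, 1 - 1 / p, p * (α - (1 - 1 / p) * ((n : ℝ) - σ)), by positivity, ?_, by ring,
      by field_simp, ?_, ?_, ?_⟩
    · have : 1 / p ≤ 1 := by
        rw [div_le_one hp0]; exact hp1
      linarith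
    · -- 0 < β
      have hp' : p * ((n : ℝ) - σ - α) < (n : ℝ) - σ := by
        have h2 := mul_lt_mul_of_pos_right hp hd
        rw [add_mul, one_mul, div_mul_cancel₀ _ hd.ne'] at h2
        linarith
      have h4 : (n:ℝ) - σ - α < (1/p) * ((n:ℝ) - σ) := by
        have h5 := mul_lt_mul_of_pos_left hp' (by positivity : (0:ℝ) < 1 / p)
        rw [show (1/p) * (p * ((n:ℝ) - σ - α)) = ((n:ℝ) - σ - α) * ((1/p) * p) by ring,
          one_div_mul_cancel hp0.ne', mul_one] at h5
        exact h5
      have h3 : (1 - 1 / p) * ((n : ℝ) - σ) < α := by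
        have he : (1 - 1/p) * ((n:ℝ) - σ) = ((n:ℝ) - σ) - (1/p) * ((n:ℝ) - σ) := by ring
        rw [he]; linarith
      have := sub_pos.mpr h3
      positivity
    · -- β < n
      have hps : p * (1 / p) = 1 := mul_one_div_cancel hp0.ne'
      nlinarith [mul_le_mul_of_nonneg_left hαn.le (by linarith : (0:ℝ) ≤ p - 1)]
    · field_simp
      ring
  have hβn' : β - (n : ℝ) ≤ 0 := by linarith
  -- constants
  set v1 : ℝ≥0∞ := volume (ball (0 : Euc n) 1) with hv1
  have hv10 : v1 ≠ 0 := (measure_ball_pos volume 0 one_pos).ne'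
  have hv1T : v1 ≠ ⊤ := measure_ball_lt_top.ne
  have hαn1 : 0 ≤ 1 - α / (n : ℝ) := by
    have : α / (n : ℝ) ≤ 1 := by
      rw [div_le_one (by linarith : (0:ℝ) < (n:ℝ))]
      linarith
    linarith
  set c1 : ℝ≥0∞ := v1 ^ (1 - α / (n : ℝ)) with hc1
  have hc10 : c1 ≠ 0 := by
    simp only [hc1, ne_eq, ENNReal.rpow_eq_zero_iff, not_or]
    constructor
    · rintro ⟨h, -⟩; exact hv10 h
    · rintro ⟨h, -⟩; exact hv1T h
  have hc1T : c1 ≠ ⊤ := ENNReal.rpow_ne_top_of_nonneg hαn1 hv1T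
  -- the Riesz potential
  set K : Euc n → Euc n → ℝ≥0∞ :=
    fun x y => (ENNReal.ofReal ‖x - y‖) ^ (β - (n : ℝ)) with hK
  set I : Euc n → ℝ≥0∞ := fun x => ∫⁻ y, K x y ∂μ with hI
  -- pointwise bound
  have hpt : ∀ x : Euc n, cappedFracMaximal (Metric.diam Ω) μ σ α x ≤ c1⁻¹ * (I x) ^ s := by
    intro x
    rw [cappedFracMaximal]
    refine iSup₂_le fun r hr => ?_
    obtain ⟨hr0, -⟩ := hr
    have hoRr0 : ENNReal.ofReal r ≠ 0 := (ENNReal.ofReal_pos.2 hr0).ne'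
    have hoRrT : ENNReal.ofReal r ≠ ⊤ := ENNReal.ofReal_ne_top
    -- the volume of the ball
    have hV : volume (ball x r) ^ (1 - α / (n : ℝ)) =
        (ENNReal.ofReal r) ^ ((n : ℝ) - α) * c1 := by
      rw [Measure.addHaar_ball volume x hr0.le, finrank_euclideanSpace_fin,
        ENNReal.mul_rpow_of_nonneg _ _ hαn1, ← Real.rpow_natCast r n,
        ← ENNReal.ofReal_rpow_of_pos hr0, ← ENNReal.rpow_mul]
      congr 2
      field_simp
    -- min bound
    have hmin : min (μ (ball x r)) (ENNReal.ofReal (r ^ σ)) ≤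
        (μ (ball x r)) ^ s * (ENNReal.ofReal r) ^ (σ * t) := by
      calc min (μ (ball x r)) (ENNReal.ofReal (r ^ σ))
          = (min (μ (ball x r)) (ENNReal.ofReal (r ^ σ))) ^ (s + t) := by
            rw [hst, ENNReal.rpow_one]
        _ = (min (μ (ball x r)) (ENNReal.ofReal (r ^ σ))) ^ s *
              (min (μ (ball x r)) (ENNReal.ofReal (r ^ σ))) ^ t :=
            ENNReal.rpow_add_of_nonneg _ _ hs0.le ht0
        _ ≤ (μ (ball x r)) ^ s * (ENNReal.ofReal (r ^ σ)) ^ t :=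
            mul_le_mul' (ENNReal.rpow_le_rpow (min_le_left _ _) hs0.le)
              (ENNReal.rpow_le_rpow (min_le_right _ _) ht0)
        _ = (μ (ball x r)) ^ s * (ENNReal.ofReal r) ^ (σ * t) := by
            rw [← ENNReal.ofReal_rpow_of_pos hr0, ← ENNReal.rpow_mul]
    -- measure bound via the kernel
    have hm : μ (ball x r) * (ENNReal.ofReal r) ^ (β - (n : ℝ)) ≤ I x := by
      calc μ (ball x r) * (ENNReal.ofReal r) ^ (β - (n : ℝ))
          = ∫⁻ _ in ball x r, (ENNReal.ofReal r) ^ (β - (n : ℝ)) ∂μ := by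
            rw [setLIntegral_const, mul_comm]
        _ ≤ ∫⁻ y in ball x r, K x y ∂μ := by
            refine lintegral_mono_ae ?_
            filter_upwards [ae_restrict_mem measurableSet_ball] with y hy
            refine ennrpow_anti hβn' (ENNReal.ofReal_le_ofReal ?_)
            rw [mem_ball, dist_comm, dist_eq_norm] at hy
            exact hy.le
        _ ≤ I x := setLIntegral_le_lintegral _ _
    have hm2 : μ (ball x r) ≤ I x * (ENNReal.ofReal r) ^ ((n : ℝ) - β) := by
      have h5 := mul_le_mul_left hm ((ENNReal.ofReal r) ^ ((n : ℝ) - β))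
      rwa [mul_assoc, ← ENNReal.rpow_add _ _ hoRr0 hoRrT,
        show β - (n : ℝ) + ((n : ℝ) - β) = 0 by ring, ENNReal.rpow_zero, mul_one] at h5
    have hm3 : (μ (ball x r)) ^ s ≤ (I x) ^ s * (ENNReal.ofReal r) ^ (((n : ℝ) - β) * s) := by
      calc (μ (ball x r)) ^ s ≤ (I x * (ENNReal.ofReal r) ^ ((n : ℝ) - β)) ^ s :=
            ENNReal.rpow_le_rpow hm2 hs0.le
        _ = (I x) ^ s * (ENNReal.ofReal r) ^ (((n : ℝ) - β) * s) := by
            rw [ENNReal.mul_rpow_of_nonneg _ _ hs0.le, ← ENNReal.rpow_mul]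
    -- combine
    rw [hV, ENNReal.div_le_iff (mul_ne_zero (by simp [hoRr0]) hc10)
      (ENNReal.mul_ne_top (ENNReal.rpow_ne_top_of_nonneg (by linarith) hoRrT) hc1T)]
    calc min (μ (ball x r)) (ENNReal.ofReal (r ^ σ))
        ≤ (μ (ball x r)) ^ s * (ENNReal.ofReal r) ^ (σ * t) := hmin
      _ ≤ ((I x) ^ s * (ENNReal.ofReal r) ^ (((n : ℝ) - β) * s)) *
            (ENNReal.ofReal r) ^ (σ * t) := mul_le_mul_left hm3 _
      _ = (I x) ^ s * (ENNReal.ofReal r) ^ (((n : ℝ) - β) * s + σ * t) := by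
          rw [mul_assoc, ← ENNReal.rpow_add _ _ hoRr0 hoRrT]
      _ = (I x) ^ s * (ENNReal.ofReal r) ^ ((n : ℝ) - α) := by
          rw [show ((n : ℝ) - β) * s + σ * t = (n : ℝ) - α from by linear_combination -hkey]
      _ = c1⁻¹ * (I x) ^ s * ((ENNReal.ofReal r) ^ ((n : ℝ) - α) * c1) := by
          rw [show c1⁻¹ * (I x) ^ s * ((ENNReal.ofReal r) ^ ((n : ℝ) - α) * c1)
            = ((I x) ^ s * (ENNReal.ofReal r) ^ ((n : ℝ) - α)) * (c1⁻¹ * c1) by ring,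
            ENNReal.inv_mul_cancel hc10 hc1T, mul_one]
  -- measurability of the kernel
  have hKmeas : Measurable (Function.uncurry K) := by
    have h1 : Measurable fun q : Euc n × Euc n => ENNReal.ofReal ‖q.1 - q.2‖ :=
      ((continuous_fst.sub continuous_snd).norm.measurable).ennreal_ofReal
    exact (ENNReal.continuous_rpow_const.measurable).comp h1
  -- kernel integral bound
  obtain ⟨C, hC, hCb⟩ := kernel_bound n (by omega) Ω hΩopen.measurableSet hΩbdd β hβ0 hβn
  have hc1pT : (c1⁻¹) ^ p ≠ ⊤ :=
    ENNReal.rpow_ne_top_of_nonneg hp0.le (by simp [ENNReal.inv_ne_top, hc10])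
  calc ∫⁻ x in Ω, (cappedFracMaximal (Metric.diam Ω) μ σ α x) ^ p
      ≤ ∫⁻ x in Ω, (c1⁻¹ * (I x) ^ s) ^ p :=
        lintegral_mono fun x => ENNReal.rpow_le_rpow (hpt x) hp0.le
    _ = ∫⁻ x in Ω, (c1⁻¹) ^ p * I x := by
        refine lintegral_congr fun x => ?_
        rw [ENNReal.mul_rpow_of_nonneg _ _ hp0.le, ← ENNReal.rpow_mul, hsp, ENNReal.rpow_one]
    _ = (c1⁻¹) ^ p * ∫⁻ x in Ω, I x := lintegral_const_mul' _ _ hc1pT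
    _ = (c1⁻¹) ^ p * ∫⁻ y, (∫⁻ x in Ω, K x y) ∂μ := by
        rw [hI, lintegral_lintegral_swap hKmeas.aemeasurable]
    _ ≤ (c1⁻¹) ^ p * ∫⁻ _, C ∂μ := by
        gcongr with y
        exact hCb y
    _ = (c1⁻¹) ^ p * (C * μ Set.univ) := by rw [lintegral_const]
    _ < ⊤ := ENNReal.mul_lt_top hc1pT.lt_top (ENNReal.mul_lt_top hC (measure_lt_top μ _))
end
end

section
/- The exponent bound for the capped fractional maximal function is sharp: let n ≥ 2, let σ ∈ {1,…,n−1} be an integer, α ∈ (0, n−σ), and p ≥ 1 + α/(n−σ−α). Let E := {x ∈ ℝⁿ : x_{σ+1} = ⋯ = x_n = 0}, let Ω := B(0,1) be the open unit ball, and let μ be the σ-dimensional Hausdorff measure restricted to E ∩ B(0,1). Then ∫_Ω (M_α^σ μ(x))^p dx = ∞, where the supremum in M_α^σ is taken over 0 < r ≤ 2. -/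
noncomputable section
open MeasureTheory Metric Set Filter
open scoped ENNReal Topology NNReal

/-!
Write `n = σ + m` and let `d` be the distance from `x` to a point `y` of the plane `E`. The ball
`B(x, 2d)` contains the `σ`-disc of `E` of radius `d` around `y`, whose `μ`-mass is a fixed
multiple of `d^σ` because `E` is an isometric copy of `ℝ^σ`, on which `μH[σ]` is a Haar measure.
Hence `M_α^σ μ(x) ≳ d^σ / d^(n-α) = d^(-(m-α))`, and the hypothesis on `p` says exactly
`(m - α) p ≥ m`, so `(M_α^σ μ)^p ≳ d^(-m)`. The boxes with `σ` sides of length `≍ 1` along `E`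
and `m` sides in `(s, 2s)` across `E`, for `s = 2^(-k)`, are pairwise disjoint, have volume
`≍ s^m` and lie where `d ≲ s`, so each of them contributes a fixed positive amount to the
integral.
-/

theorem MeasureTheory.setLIntegral_eq_top_of_pairwise_disjoint {X ι : Type*} [MeasurableSpace X]
    {μ : Measure X} [Countable ι] [Infinite ι] {f : X → ℝ≥0∞} {s : Set X} {A : ι → Set X}
    (hA : ∀ i, MeasurableSet (A i)) (hdisj : Pairwise (Function.onFun Disjoint A))
    (hAs : ∀ i, A i ⊆ s) {ε : ℝ≥0∞} (hε : ε ≠ 0) (hεA : ∀ i, ε ≤ ∫⁻ x in A i, f x ∂μ) :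
    ∫⁻ x in s, f x ∂μ = ∞ := by
  refine top_unique ?_
  calc ∞ = ∑' _ : ι, ε := (ENNReal.tsum_const_eq_top_of_ne_zero hε).symm
    _ ≤ ∑' i, ∫⁻ x in A i, f x ∂μ := ENNReal.tsum_le_tsum hεA
    _ = ∫⁻ x in ⋃ i, A i, f x ∂μ := (lintegral_iUnion hA hdisj f).symm
    _ ≤ ∫⁻ x in s, f x ∂μ := lintegral_mono_set (iUnion_subset hAs)

theorem EuclideanSpace.norm_le_sqrt_card_mul {ι : Type*} [Fintype ι] (x : EuclideanSpace ℝ ι)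
    {C : ℝ} (hC : 0 ≤ C) (hx : ∀ i, |x i| ≤ C) : ‖x‖ ≤ √(Fintype.card ι) * C := by
  rw [EuclideanSpace.norm_eq, ← Real.sqrt_sq hC, ← Real.sqrt_mul (Nat.cast_nonneg _)]
  gcongr
  calc ∑ i, ‖x i‖ ^ 2 ≤ ∑ _i : ι, C ^ 2 := by
        gcongr with i
        exact (Real.norm_eq_abs _).trans_le (hx i)
    _ = _ := by simp

theorem Isometry.hausdorffMeasure_ball_inter_range {F X : Type*} [NormedAddCommGroup F]
    [NormedSpace ℝ F] [FiniteDimensional ℝ F] [MeasurableSpace F] [BorelSpace F]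
    [MetricSpace X] [MeasurableSpace X] [BorelSpace X] {f : F → X} (hf : Isometry f)
    (z : F) {r : ℝ} (hr : 0 < r) :
    μH[Module.finrank ℝ F] (ball (f z) r ∩ range f) =
      ENNReal.ofReal (r ^ Module.finrank ℝ F) * μH[Module.finrank ℝ F] (ball (0 : F) 1) := by
  rw [← hf.hausdorffMeasure_preimage (Or.inl (by positivity)), hf.preimage_ball,
    Measure.addHaar_ball_of_pos _ _ hr]

theorem Isometry.le_hausdorffMeasure_restrict_ball {F X : Type*} [NormedAddCommGroup F]
    [NormedSpace ℝ F] [FiniteDimensional ℝ F] [MeasurableSpace F] [BorelSpace F]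
    [NormedAddCommGroup X] [MeasurableSpace X] [BorelSpace X] {f : F → X} (hf : Isometry f)
    {x y : X} (hy : y ∈ range f) (hxy : ‖y‖ + dist x y ≤ 1) (hd : 0 < dist x y) :
    ENNReal.ofReal (dist x y ^ Module.finrank ℝ F) * μH[Module.finrank ℝ F] (ball (0 : F) 1) ≤
      (μH[Module.finrank ℝ F]).restrict (range f ∩ ball 0 1) (ball x (2 * dist x y)) := by
  obtain ⟨z, rfl⟩ := hy
  rw [← hf.hausdorffMeasure_ball_inter_range z hd, Measure.restrict_apply measurableSet_ball]
  refine measure_mono fun w ⟨hw, hwf⟩ => ⟨?_, hwf, ?_⟩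
  · rw [mem_ball] at hw ⊢
    linarith [dist_triangle w (f z) x, dist_comm x (f z)]
  · rw [mem_ball] at hw
    rw [mem_ball, dist_zero_right]
    linarith [norm_le_norm_add_norm_sub' w (f z), dist_eq_norm w (f z)]

section MaximalFunction

variable {n : ℕ} {D : ℝ} {μ : Measure (Euc n)} {σ α : ℝ} {x : Euc n}

theorem le_cappedFracMaximal {r : ℝ} (hr : r ∈ Ioc 0 D) :
    min (μ (ball x r)) (ENNReal.ofReal (r ^ σ)) / volume (ball x r) ^ (1 - α / n) ≤
      cappedFracMaximal D μ σ α x :=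
  le_iSup₂ (f := fun r _ => min (μ (ball x r)) (ENNReal.ofReal (r ^ σ)) /
    volume (ball x r) ^ (1 - α / n)) r hr

theorem volume_ball_rpow (hn : n ≠ 0) {r : ℝ} (hr : 0 < r) :
    volume (ball x r) ^ (1 - α / n) =
      ENNReal.ofReal (r ^ ((n : ℝ) - α)) * volume (ball (0 : Euc n) 1) ^ (1 - α / n) := by
  rw [Measure.addHaar_ball_of_pos _ _ hr, finrank_euclideanSpace_fin,
    ENNReal.mul_rpow_of_ne_zero (by positivity) (measure_ball_pos _ _ one_pos).ne',
    ENNReal.ofReal_rpow_of_pos (by positivity), ← Real.rpow_natCast, ← Real.rpow_mul hr.le]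
  congr 3
  field_simp

theorem le_cappedFracMaximal_of_le_measure_ball (hn : n ≠ 0) (hσ : 0 ≤ σ) {c : ℝ≥0∞} {d : ℝ}
    (hd : 0 < d) (hdD : 2 * d ≤ D) (hμ : c * ENNReal.ofReal (d ^ σ) ≤ μ (ball x (2 * d))) :
    min c 1 / (ENNReal.ofReal (2 ^ ((n : ℝ) - α)) * volume (ball (0 : Euc n) 1) ^ (1 - α / n)) *
        ENNReal.ofReal (d ^ (σ - (n - α))) ≤
      cappedFracMaximal D μ σ α x := by
  have hV : volume (ball (0 : Euc n) 1) ^ (1 - α / n) ≠ ∞ :=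
    ENNReal.rpow_ne_top_of_ne_zero (measure_ball_pos _ _ one_pos).ne' measure_ball_lt_top.ne
  have hvol : volume (ball x (2 * d)) ^ (1 - α / n) =
      ENNReal.ofReal (2 ^ ((n : ℝ) - α)) * volume (ball (0 : Euc n) 1) ^ (1 - α / n) *
        ENNReal.ofReal (d ^ ((n : ℝ) - α)) := by
    rw [volume_ball_rpow hn (by positivity), Real.mul_rpow zero_le_two hd.le,
      ENNReal.ofReal_mul (by positivity)]
    ring
  have hmin : min c 1 * ENNReal.ofReal (d ^ σ) ≤
      min (μ (ball x (2 * d))) (ENNReal.ofReal ((2 * d) ^ σ)) := by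
    refine le_min ((mul_le_mul_left (min_le_left _ _) _).trans hμ) ?_
    calc min c 1 * ENNReal.ofReal (d ^ σ) ≤ ENNReal.ofReal (d ^ σ) :=
          mul_le_of_le_one_left' (min_le_right _ _)
      _ ≤ ENNReal.ofReal ((2 * d) ^ σ) := by gcongr; linarith
  calc _ = min c 1 * ENNReal.ofReal (d ^ σ) /
        (ENNReal.ofReal (2 ^ ((n : ℝ) - α)) * volume (ball (0 : Euc n) 1) ^ (1 - α / n) *
          ENNReal.ofReal (d ^ ((n : ℝ) - α))) := by
        rw [ENNReal.mul_div_mul_comm (Or.inr ENNReal.ofReal_ne_top)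
          (Or.inl (ENNReal.mul_ne_top ENNReal.ofReal_ne_top hV)),
          ← ENNReal.ofReal_div_of_pos (by positivity), Real.rpow_sub hd]
    _ ≤ _ := by
        rw [← hvol]
        exact (ENNReal.div_le_div_right hmin _).trans (le_cappedFracMaximal ⟨by positivity, hdD⟩)

end MaximalFunction

section CoordinatePlane

variable {σ m : ℕ}

def extendByZero (σ m : ℕ) : Euc σ →ₗᵢ[ℝ] Euc (σ + m) where
  toFun z := WithLp.toLp 2 (Fin.append z.ofLp 0)
  map_add' z w := by
    ext i
    refine Fin.addCases (fun j => ?_) (fun j => ?_) i <;> simp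
  map_smul' c z := by
    ext i
    refine Fin.addCases (fun j => ?_) (fun j => ?_) i <;> simp
  norm_map' z := by
    simp [EuclideanSpace.norm_eq, Fin.sum_univ_add]

theorem extendByZero_apply_castAdd (z : Euc σ) (j : Fin σ) :
    extendByZero σ m z (Fin.castAdd m j) = z j := by
  simp [extendByZero]

theorem extendByZero_apply_natAdd (z : Euc σ) (j : Fin m) :
    extendByZero σ m z (Fin.natAdd σ j) = 0 := by
  simp [extendByZero]

theorem range_extendByZero :
    range (extendByZero σ m) = {x : Euc (σ + m) | ∀ i : Fin (σ + m), σ ≤ (i : ℕ) → x i = 0} := by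
  ext x
  constructor
  · rintro ⟨z, rfl⟩ i hi
    obtain ⟨j, rfl⟩ : ∃ j : Fin m, Fin.natAdd σ j = i :=
      ⟨⟨i - σ, by omega⟩, Fin.ext (by simp; omega)⟩
    exact extendByZero_apply_natAdd z j
  · intro hx
    refine ⟨WithLp.toLp 2 fun j => x (Fin.castAdd m j), ?_⟩
    ext i
    refine Fin.addCases (fun j => ?_) (fun j => ?_) i
    · simp [extendByZero_apply_castAdd]
    · simp [extendByZero_apply_natAdd, hx (Fin.natAdd σ j)]

end CoordinatePlane

theorem exists_le_cappedFracMaximal_extendByZero {σ m : ℕ} (hσm : σ + m ≠ 0) (α : ℝ) :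
    ∃ K ≠ 0, ∀ x y : Euc (σ + m), y ∈ range (extendByZero σ m) → ‖y‖ + dist x y ≤ 1 →
      0 < dist x y → K * ENNReal.ofReal (dist x y ^ (-((m : ℝ) - α))) ≤
        cappedFracMaximal 2 ((μH[(σ : ℝ)]).restrict (range (extendByZero σ m) ∩ ball 0 1))
          σ α x := by
  have hV : volume (ball (0 : Euc (σ + m)) 1) ^ (1 - α / (σ + m : ℕ)) ≠ ∞ :=
    ENNReal.rpow_ne_top_of_ne_zero (measure_ball_pos _ _ one_pos).ne' measure_ball_lt_top.ne
  refine ⟨min (μH[(σ : ℝ)] (ball (0 : Euc σ) 1)) 1 /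
    (ENNReal.ofReal (2 ^ (((σ + m : ℕ) : ℝ) - α)) *
      volume (ball (0 : Euc (σ + m)) 1) ^ (1 - α / (σ + m : ℕ))), ?_, fun x y hy hxy hd => ?_⟩
  · exact (ENNReal.div_pos_iff.2 ⟨(lt_min (measure_ball_pos _ _ one_pos) one_pos).ne',
      ENNReal.mul_ne_top ENNReal.ofReal_ne_top hV⟩).ne'
  have hμ := (extendByZero σ m).isometry.le_hausdorffMeasure_restrict_ball hy hxy hd
  simp only [finrank_euclideanSpace_fin] at hμ
  have hM := le_cappedFracMaximal_of_le_measure_ball (D := 2) (α := α) hσm (Nat.cast_nonneg σ) hd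
    (by linarith [norm_nonneg y])
    (by rwa [mul_comm, Real.rpow_natCast])
  convert hM using 4
  push_cast
  ring

section ThinBoxes

variable {σ m : ℕ} {b s : ℝ} {x : Euc (σ + m)}

def thinBox (σ m : ℕ) (b s : ℝ) : Set (Euc (σ + m)) :=
  WithLp.ofLp ⁻¹' univ.pi (Fin.append (fun _ => Ioo (-b) b) (fun _ => Ioo s (2 * s)))

theorem mem_thinBox : x ∈ thinBox σ m b s ↔
    (∀ j, x (Fin.castAdd m j) ∈ Ioo (-b) b) ∧ ∀ j, x (Fin.natAdd σ j) ∈ Ioo s (2 * s) := by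
  simp [thinBox, Fin.forall_fin_add]

theorem measurableSet_thinBox : MeasurableSet (thinBox σ m b s) := by
  refine WithLp.measurable_ofLp _ _ (MeasurableSet.univ_pi fun i => ?_)
  refine Fin.addCases (fun j => ?_) (fun j => ?_) i <;> simp [measurableSet_Ioo]

theorem volume_thinBox (hb : 0 ≤ b) (hs : 0 ≤ s) :
    volume (thinBox σ m b s) = ENNReal.ofReal ((2 * b) ^ σ * s ^ m) := by
  rw [thinBox, (PiLp.volume_preserving_ofLp _).measure_preimage
    (MeasurableSet.univ_pi fun i => ?_).nullMeasurableSet, volume_pi_pi, Fin.prod_univ_add]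
  · simp only [Fin.append_left, Fin.append_right, Real.volume_Ioo, Finset.prod_const,
      Finset.card_univ, Fintype.card_fin]
    rw [ENNReal.ofReal_mul (by positivity), ENNReal.ofReal_pow (by positivity),
      ENNReal.ofReal_pow hs, sub_neg_eq_add, ← two_mul, two_mul s, add_sub_cancel_right]
  · refine Fin.addCases (fun j => ?_) (fun j => ?_) i <;> simp [measurableSet_Ioo]

theorem disjoint_thinBox (hm : m ≠ 0) {s' : ℝ} (h : 2 * s' ≤ s) :
    Disjoint (thinBox σ m b s) (thinBox σ m b s') := by
  refine Set.disjoint_left.2 fun x hx hx' => ?_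
  have h1 := (mem_thinBox.1 hx).2 ⟨0, Nat.pos_of_ne_zero hm⟩
  have h2 := (mem_thinBox.1 hx').2 ⟨0, Nat.pos_of_ne_zero hm⟩
  linarith [h1.1, h2.2]

theorem norm_le_of_mem_thinBox (hs : 0 ≤ s) (hsb : 2 * s ≤ b) (hx : x ∈ thinBox σ m b s) :
    ‖x‖ ≤ √(σ + m : ℕ) * b := by
  obtain ⟨h1, h2⟩ := mem_thinBox.1 hx
  refine (EuclideanSpace.norm_le_sqrt_card_mul x (by linarith) fun i => ?_).trans_eq (by simp)
  refine Fin.addCases (fun j => abs_le.2 ⟨(h1 j).1.le, (h1 j).2.le⟩)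
    (fun j => abs_le.2 ⟨by linarith [(h2 j).1], by linarith [(h2 j).2]⟩) i

theorem exists_near_point_of_mem_thinBox (hm : m ≠ 0) (hs : 0 < s) (hsb : 2 * s ≤ b)
    (hx : x ∈ thinBox σ m b s) :
    ∃ y ∈ range (extendByZero σ m), ‖y‖ ≤ √(σ + m : ℕ) * b ∧ 0 < dist x y ∧
      dist x y ≤ √(σ + m : ℕ) * (2 * s) := by
  obtain ⟨h1, h2⟩ := mem_thinBox.1 hx
  set y := extendByZero σ m (WithLp.toLp 2 fun j => x (Fin.castAdd m j))
  have hyl (j : Fin σ) : y (Fin.castAdd m j) = x (Fin.castAdd m j) := by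
    simp [y, extendByZero_apply_castAdd]
  have hyr (j : Fin m) : y (Fin.natAdd σ j) = 0 := extendByZero_apply_natAdd _ j
  refine ⟨y, mem_range_self _, ?_, ?_, ?_⟩
  · refine (EuclideanSpace.norm_le_sqrt_card_mul y (by linarith) fun i => ?_).trans_eq (by simp)
    refine Fin.addCases (fun j => ?_) (fun j => ?_) i
    · rw [hyl]; exact abs_le.2 ⟨(h1 j).1.le, (h1 j).2.le⟩
    · rw [hyr, abs_zero]; linarith
  · set j₀ : Fin m := ⟨0, Nat.pos_of_ne_zero hm⟩
    calc 0 < x (Fin.natAdd σ j₀) := hs.trans (h2 j₀).1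
      _ = |(x - y) (Fin.natAdd σ j₀)| := by
          rw [PiLp.sub_apply, hyr, sub_zero, abs_of_pos (hs.trans (h2 j₀).1)]
      _ ≤ dist x y := by rw [dist_eq_norm, ← Real.norm_eq_abs]; exact PiLp.norm_apply_le _ _
  · rw [dist_eq_norm]
    refine (EuclideanSpace.norm_le_sqrt_card_mul _ (C := 2 * s) (by linarith)
      fun i => ?_).trans_eq (by simp)
    refine Fin.addCases (fun j => ?_) (fun j => ?_) i
    · rw [PiLp.sub_apply, hyl, sub_self, abs_zero]; linarith
    · rw [PiLp.sub_apply, hyr, sub_zero]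
      exact abs_le.2 ⟨by linarith [(h2 j).1], (h2 j).2.le⟩

end ThinBoxes

theorem le_setLIntegral_thinBox {σ m : ℕ} (hm : m ≠ 0) {α p : ℝ} (hα : α < m)
    (hp : (m : ℝ) ≤ (m - α) * p) {f : Euc (σ + m) → ℝ≥0∞} {K : ℝ≥0∞}
    (hK : ∀ x y, y ∈ range (extendByZero σ m) → ‖y‖ + dist x y ≤ 1 → 0 < dist x y →
      K * ENNReal.ofReal (dist x y ^ (-((m : ℝ) - α))) ≤ f x)
    {b t : ℝ} (hb : 2 * √(σ + m : ℕ) * b = 1) (ht : t ∈ Ioc 0 2⁻¹) :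
    K ^ p * ENNReal.ofReal ((2 * b) ^ σ * b ^ m) ≤ ∫⁻ x in thinBox σ m b (b * t), f x ^ p := by
  obtain ⟨ht0, ht⟩ := ht
  have hb0 : 0 < b := by
    by_contra! h
    nlinarith [Real.sqrt_nonneg ((σ + m : ℕ) : ℝ)]
  have hp0 : 0 ≤ p := nonneg_of_mul_nonneg_right ((Nat.cast_nonneg m).trans hp) (sub_pos.2 hα)
  have hbound (x) (hx : x ∈ thinBox σ m b (b * t)) :
      K * ENNReal.ofReal (t ^ (-((m : ℝ) - α))) ≤ f x := by
    obtain ⟨y, hy, hyn, hd, hdt⟩ :=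
      exists_near_point_of_mem_thinBox hm (by positivity) (by nlinarith) hx
    have hdt : dist x y ≤ t := hdt.trans_eq (by linear_combination t * hb)
    have hyn : ‖y‖ ≤ 1 / 2 := hyn.trans_eq (by linear_combination hb / 2)
    exact (mul_le_mul_right (ENNReal.ofReal_le_ofReal
      (Real.rpow_le_rpow_of_nonpos hd hdt (neg_nonpos.2 (sub_pos.2 hα).le))) K).trans
      (hK x y hy (by linarith) hd)
  have hgain :
      (2 * b) ^ σ * b ^ m ≤ (t ^ (-((m : ℝ) - α))) ^ p * ((2 * b) ^ σ * (b * t) ^ m) := by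
    have : 1 ≤ (t ^ (-((m : ℝ) - α))) ^ p * t ^ m := by
      rw [← Real.rpow_mul ht0.le, ← Real.rpow_natCast, ← Real.rpow_add ht0]
      exact Real.one_le_rpow_of_pos_of_le_one_of_nonpos ht0 (by linarith) (by linarith)
    calc (2 * b) ^ σ * b ^ m ≤ (2 * b) ^ σ * b ^ m * ((t ^ (-((m : ℝ) - α))) ^ p * t ^ m) :=
          le_mul_of_one_le_right (by positivity) this
      _ = _ := by ring
  calc K ^ p * ENNReal.ofReal ((2 * b) ^ σ * b ^ m)
      ≤ (K * ENNReal.ofReal (t ^ (-((m : ℝ) - α)))) ^ p * volume (thinBox σ m b (b * t)) := by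
        rw [volume_thinBox hb0.le (by positivity), ENNReal.mul_rpow_of_nonneg _ _ hp0,
          ENNReal.ofReal_rpow_of_nonneg (by positivity) hp0, mul_assoc,
          ← ENNReal.ofReal_mul (by positivity)]
        gcongr
    _ = ∫⁻ _ in thinBox σ m b (b * t), (K * ENNReal.ofReal (t ^ (-((m : ℝ) - α)))) ^ p :=
        (setLIntegral_const _ _).symm
    _ ≤ ∫⁻ x in thinBox σ m b (b * t), f x ^ p :=
        setLIntegral_mono' measurableSet_thinBox fun x hx =>
          ENNReal.rpow_le_rpow (hbound x hx) hp0

section DyadicThinBoxes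

variable {σ m : ℕ}

def dyadicThinBox (σ m k : ℕ) : Set (Euc (σ + m)) :=
  thinBox σ m (2 * √(σ + m : ℕ))⁻¹ ((2 * √(σ + m : ℕ))⁻¹ * 2⁻¹ ^ (k + 1))

theorem pairwise_disjoint_dyadicThinBox (hm : m ≠ 0) :
    Pairwise (Function.onFun Disjoint (dyadicThinBox σ m)) := by
  refine (pairwise_disjoint_on _).2 fun k l hkl => disjoint_thinBox hm ?_
  calc 2 * ((2 * √(σ + m : ℕ))⁻¹ * 2⁻¹ ^ (l + 1)) = (2 * √(σ + m : ℕ))⁻¹ * 2⁻¹ ^ l := by ring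
    _ ≤ (2 * √(σ + m : ℕ))⁻¹ * 2⁻¹ ^ (k + 1) := by
        gcongr (2 * √(σ + m : ℕ))⁻¹ * ?_
        exact pow_le_pow_of_le_one (by norm_num) (by norm_num) hkl

theorem dyadicThinBox_subset_ball (hm : m ≠ 0) (k : ℕ) : dyadicThinBox σ m k ⊆ ball 0 1 := by
  intro x hx
  have hN : 0 < √(σ + m : ℕ) := Real.sqrt_pos.2 (by positivity)
  have ht : (2⁻¹ : ℝ) ^ (k + 1) ≤ 2⁻¹ := pow_le_of_le_one (by norm_num) (by norm_num) k.succ_ne_zero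
  refine mem_ball_zero_iff.2 ((norm_le_of_mem_thinBox (by positivity) ?_ hx).trans_lt ?_)
  · have := inv_pos.2 (mul_pos two_pos hN)
    nlinarith
  · rw [mul_inv, mul_left_comm, mul_inv_cancel₀ hN.ne']
    norm_num

theorem exists_le_setLIntegral_dyadicThinBox (hm : m ≠ 0) {α p : ℝ} (hα : α < m)
    (hp : 1 + α / (m - α) ≤ p) {f : Euc (σ + m) → ℝ≥0∞} {K : ℝ≥0∞} (hK0 : K ≠ 0)
    (hK : ∀ x y, y ∈ range (extendByZero σ m) → ‖y‖ + dist x y ≤ 1 → 0 < dist x y →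
      K * ENNReal.ofReal (dist x y ^ (-((m : ℝ) - α))) ≤ f x) :
    ∃ ε ≠ 0, ∀ k, ε ≤ ∫⁻ x in dyadicThinBox σ m k, f x ^ p := by
  have hmα : 0 < (m : ℝ) - α := sub_pos.2 hα
  have hpm : (m : ℝ) ≤ (m - α) * p :=
    calc (m : ℝ) = (m - α) * (1 + α / (m - α)) := by field_simp; ring
      _ ≤ (m - α) * p := mul_le_mul_of_nonneg_left hp hmα.le
  have hp0 : 0 ≤ p := nonneg_of_mul_nonneg_right ((Nat.cast_nonneg m).trans hpm) hmα
  set b : ℝ := (2 * √(σ + m : ℕ))⁻¹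
  have hb : 2 * √(σ + m : ℕ) * b = 1 := mul_inv_cancel₀ (by positivity)
  refine ⟨_, mul_ne_zero (ENNReal.rpow_pos_of_nonneg (pos_iff_ne_zero.2 hK0) hp0).ne'
    (ENNReal.ofReal_pos.2 (by positivity)).ne', fun k =>
      le_setLIntegral_thinBox hm hα hpm hK hb
        ⟨by positivity, pow_le_of_le_one (by norm_num) (by norm_num) k.succ_ne_zero⟩⟩

end DyadicThinBoxes

theorem cappedFracMaximal_sharp_general
    (n : ℕ) (σ : ℕ)
    (α : ℝ) (hα : α ∈ Set.Ioo (0 : ℝ) ((n : ℝ) - σ))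
    (p : ℝ) (hp : 1 + α / ((n : ℝ) - σ - α) ≤ p)
    (E : Set (Euc n)) (hE : E = {x : Euc n | ∀ i : Fin n, σ ≤ (i : ℕ) → x i = 0})
    (μ : Measure (Euc n)) (hμ : μ = (μH[(σ : ℝ)]).restrict (E ∩ ball 0 1)) :
    ∫⁻ x in ball (0 : Euc n) 1, (cappedFracMaximal 2 μ σ α x) ^ p = ∞ := by
  obtain ⟨hα0, hαn⟩ := hα
  obtain ⟨m, rfl⟩ : ∃ m, n = σ + m :=
    Nat.exists_eq_add_of_le (by exact_mod_cast (by linarith : (σ : ℝ) ≤ n))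
  push_cast at hαn hp
  rw [add_sub_cancel_left] at hαn hp
  have hm : m ≠ 0 := Nat.pos_iff_ne_zero.1 (by exact_mod_cast hα0.trans hαn)
  rw [hμ, hE, ← range_extendByZero]
  obtain ⟨K, hK0, hK⟩ := exists_le_cappedFracMaximal_extendByZero (σ := σ) (m := m) (by omega) α
  obtain ⟨ε, hε, hεk⟩ := exists_le_setLIntegral_dyadicThinBox hm hαn hp hK0 hK
  exact setLIntegral_eq_top_of_pairwise_disjoint (fun _ => measurableSet_thinBox)
    (pairwise_disjoint_dyadicThinBox hm) (dyadicThinBox_subset_ball hm) hε hεk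

/-- sharpness of the exponent bound for the capped fractional maximal
function: for the `σ`-dimensional Hausdorff measure on a `σ`-plane, the `L^p`-integral over
the unit ball diverges when `p ≥ 1 + α/(n-σ-α)`. -/
theorem cappedFracMaximal_sharp
    (n : ℕ) (hn : 2 ≤ n) (σ : ℕ) (hσ1 : 1 ≤ σ) (hσn : σ ≤ n - 1)
    (α : ℝ) (hα : α ∈ Set.Ioo (0 : ℝ) ((n : ℝ) - σ))
    (p : ℝ) (hp : 1 + α / ((n : ℝ) - σ - α) ≤ p)
    (E : Set (Euc n)) (hE : E = {x : Euc n | ∀ i : Fin n, σ ≤ (i : ℕ) → x i = 0})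
    (μ : Measure (Euc n)) (hμ : μ = (μH[(σ : ℝ)]).restrict (E ∩ ball 0 1)) :
    ∫⁻ x in ball (0 : Euc n) 1, (cappedFracMaximal 2 μ σ α x) ^ p = ∞ :=
  cappedFracMaximal_sharp_general n σ α hα p hp E hE μ hμ
end
end

section
/- Let n ≥ 2, let σ ∈ {1,…,n−1} be an integer, α ∈ (0, n−σ), let E := {x ∈ ℝⁿ : x_{σ+1} = ⋯ = x_n = 0}, and let μ be the σ-dimensional Hausdorff measure restricted to E ∩ B(0,2). Then there is a constant c > 0 depending only on n, σ, α such that for every x ∈ B(0,1) with 0 < dist(x,E) ≤ 1/2, M_α^σ μ(x) ≥ c·dist(x,E)^{σ−n+α}, where the supremum in M_α^σ is taken over 0 < r ≤ 4. -/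
/-!
Let `y` be a point of `E` nearest to `x` and `d = dist(x, E)`. The ball `B(y, d)` lies in
`B(x, 2d) ∩ B(0, 2)`. Restricting to the first `σ` coordinates is `1`-Lipschitz and maps
`E ∩ B(y, d)` onto a set containing a cube of side `2d/√n`, whose `σ`-dimensional Hausdorff
measure is its Lebesgue measure; hence `μ(B(x, 2d)) ≳ d^σ`. Testing the maximal function at
`r = 2d`, where `|B(x, r)| ≈ d^n`, gives `d^σ / (d^n)^(1 - α/n) = d^(σ - n + α)`.
-/

noncomputable section
open MeasureTheory Metric Set Filter
open scoped ENNReal Topology NNReal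

def coordPlane (n σ : ℕ) : Set (Euc n) := {x | ∀ i : Fin n, σ ≤ (i : ℕ) → x i = 0}

def zeroExtend {n σ : ℕ} (u : Fin σ → ℝ) : Euc n :=
  WithLp.toLp 2 fun i => if h : (i : ℕ) < σ then u ⟨i, h⟩ else 0

def restrictCoord {n σ : ℕ} (h : σ ≤ n) (x : Euc n) : Fin σ → ℝ :=
  fun j => x (Fin.castLE h j)

section CoordPlane

variable {n σ : ℕ}

theorem zero_mem_coordPlane : (0 : Euc n) ∈ coordPlane n σ := fun _ _ => rfl

theorem isClosed_coordPlane : IsClosed (coordPlane n σ) := by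
  simp only [coordPlane, ofPred_forall]
  exact isClosed_iInter fun i => isClosed_iInter fun _ =>
    isClosed_eq (EuclideanSpace.proj i).continuous continuous_const

theorem zeroExtend_mem_coordPlane (u : Fin σ → ℝ) :
    (zeroExtend u : Euc n) ∈ coordPlane n σ :=
  fun i hi => by simp [zeroExtend, Nat.not_lt.2 hi]

theorem restrictCoord_zeroExtend (h : σ ≤ n) (u : Fin σ → ℝ) :
    restrictCoord h (zeroExtend u) = u := by
  funext j
  simp [restrictCoord, zeroExtend]

theorem zeroExtend_restrictCoord (h : σ ≤ n) {y : Euc n} (hy : y ∈ coordPlane n σ) :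
    zeroExtend (restrictCoord h y) = y := by
  ext i
  by_cases hi : (i : ℕ) < σ
  · simp [zeroExtend, restrictCoord, hi]
  · simp [zeroExtend, hi, hy i (Nat.not_lt.1 hi)]

theorem lipschitzWith_restrictCoord (h : σ ≤ n) : LipschitzWith 1 (restrictCoord h) :=
  LipschitzWith.of_dist_le_mul fun x y => by
    rw [NNReal.coe_one, one_mul, dist_pi_le_iff dist_nonneg]
    exact fun j => (dist_le_pi_dist (WithLp.ofLp x) (WithLp.ofLp y) _).trans
      ((PiLp.lipschitzWith_ofLp 2 _).dist_le_mul x y |>.trans_eq (by simp))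

theorem dist_zeroExtend_le (u v : Fin σ → ℝ) :
    dist (zeroExtend u : Euc n) (zeroExtend v) ≤ √n * dist u v := by
  have hK := (PiLp.antilipschitzWith_ofLp 2 fun _ : Fin n => ℝ).le_mul_dist
    (zeroExtend u) (zeroExtend v)
  have hsup :
      dist (WithLp.ofLp (zeroExtend u : Euc n)) (WithLp.ofLp (zeroExtend v)) ≤ dist u v := by
    refine (dist_pi_le_iff dist_nonneg).2 fun i => ?_
    by_cases hi : (i : ℕ) < σ
    · simpa [zeroExtend, hi] using dist_le_pi_dist u v _
    · simp [zeroExtend, hi]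
  have hsqrt :
      (((Fintype.card (Fin n) : ℝ≥0) ^ (1 / 2 : ℝ≥0∞).toReal : ℝ≥0) : ℝ) = √n := by
    rw [NNReal.coe_rpow, Real.sqrt_eq_rpow]; simp
  rw [hsqrt] at hK
  exact hK.trans (by gcongr)

theorem ball_subset_restrictCoord_image_coordPlane_inter_ball (h : σ ≤ n) (hn : 0 < n)
    {y : Euc n} (hy : y ∈ coordPlane n σ) (ρ : ℝ) :
    ball (restrictCoord h y) (ρ / √n) ⊆
      restrictCoord h '' (coordPlane n σ ∩ ball y ρ) := by
  intro u hu
  refine ⟨zeroExtend u, ⟨zeroExtend_mem_coordPlane u, ?_⟩, restrictCoord_zeroExtend h u⟩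
  have hsqrt : 0 < √(n : ℝ) := by positivity
  calc dist (zeroExtend u) y = dist (zeroExtend u) (zeroExtend (restrictCoord h y)) := by
        rw [zeroExtend_restrictCoord h hy]
    _ ≤ √n * dist u (restrictCoord h y) := dist_zeroExtend_le _ _
    _ < √n * (ρ / √n) := by gcongr; exact hu
    _ = ρ := mul_div_cancel₀ ρ hsqrt.ne'

theorem ofReal_le_hausdorffMeasure_coordPlane_inter_ball (h : σ ≤ n) (hn : 0 < n)
    {y : Euc n} (hy : y ∈ coordPlane n σ) {ρ : ℝ} (hρ : 0 < ρ) :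
    ENNReal.ofReal ((2 * (ρ / √n)) ^ σ) ≤ μH[σ] (coordPlane n σ ∩ ball y ρ) := by
  have hHaus : (μH[σ] : Measure (Fin σ → ℝ)) = volume := by
    simpa only [Fintype.card_fin] using hausdorffMeasure_pi_real (ι := Fin σ)
  calc ENNReal.ofReal ((2 * (ρ / √n)) ^ σ)
      = μH[σ] (ball (restrictCoord h y) (ρ / √n)) := by
        rw [hHaus, Real.volume_pi_ball _ (by positivity), Fintype.card_fin]
    _ ≤ μH[σ] (restrictCoord h '' (coordPlane n σ ∩ ball y ρ)) :=
        measure_mono (ball_subset_restrictCoord_image_coordPlane_inter_ball h hn hy ρ)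
    _ ≤ μH[σ] (coordPlane n σ ∩ ball y ρ) := by
        simpa using
          (lipschitzWith_restrictCoord h).hausdorffMeasure_image_le (Nat.cast_nonneg σ) _

end CoordPlane

theorem ofReal_le_cappedFracMaximal {n : ℕ} (hn : 0 < n) {D r a σ α : ℝ}
    {μ : Measure (Euc n)} {x : Euc n} (hr : r ∈ Ioc 0 D) (ha : a ≤ 1)
    (hμ : ENNReal.ofReal (a * r ^ σ) ≤ μ (ball x r)) :
    ENNReal.ofReal (a * r ^ (σ - n + α) / (volume (ball (0 : Euc n) 1)).toReal ^ (1 - α / n)) ≤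
      cappedFracMaximal D μ σ α x := by
  set v := (volume (ball (0 : Euc n) 1)).toReal
  have hv : 0 < v := ENNReal.toReal_pos (measure_ball_pos _ _ one_pos).ne' measure_ball_lt_top.ne
  have hr0 : 0 < r := hr.1
  have hvol : volume (ball x r) = ENNReal.ofReal (r ^ n * v) := by
    rw [Measure.addHaar_ball_of_pos _ _ hr0, finrank_euclideanSpace_fin,
      ENNReal.ofReal_mul (by positivity), ENNReal.ofReal_toReal measure_ball_lt_top.ne]
  have hpow :
      a * r ^ (σ - n + α) / v ^ (1 - α / n) = a * r ^ σ / (r ^ n * v) ^ (1 - α / n) := by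
    have hn' : (n : ℝ) ≠ 0 := by positivity
    rw [Real.mul_rpow (by positivity) hv.le, ← Real.rpow_natCast, ← Real.rpow_mul hr0.le,
      show σ - n + α = σ - n * (1 - α / n) by field_simp; ring, Real.rpow_sub hr0]
    field_simp
  calc ENNReal.ofReal (a * r ^ (σ - n + α) / v ^ (1 - α / n))
      = ENNReal.ofReal (a * r ^ σ) / volume (ball x r) ^ (1 - α / n) := by
        rw [hpow, ENNReal.ofReal_div_of_pos (by positivity), hvol,
          ENNReal.ofReal_rpow_of_pos (by positivity)]
    _ ≤ min (μ (ball x r)) (ENNReal.ofReal (r ^ σ)) / volume (ball x r) ^ (1 - α / n) := by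
        gcongr
        exact le_min hμ (ENNReal.ofReal_le_ofReal (mul_le_of_le_one_left (by positivity) ha))
    _ ≤ cappedFracMaximal D μ σ α x := le_iSup₂_of_le (α := ℝ≥0∞) r hr le_rfl

theorem cappedFracMaximal_lower_bound_general
    (n : ℕ) (hn : 2 ≤ n) (σ : ℕ) (hσn : σ ≤ n - 1)
    (α : ℝ)
    (E : Set (Euc n)) (hE : E = {x : Euc n | ∀ i : Fin n, σ ≤ (i : ℕ) → x i = 0})
    (μ : Measure (Euc n)) (hμ : μ = (μH[(σ : ℝ)]).restrict (E ∩ ball 0 2)) :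
    ∃ c : ℝ, 0 < c ∧
      ∀ x ∈ ball (0 : Euc n) 1, 0 < infDist x E → infDist x E ≤ 1 / 2 →
        ENNReal.ofReal (c * infDist x E ^ ((σ : ℝ) - n + α)) ≤
          cappedFracMaximal 4 μ σ α x := by
  obtain rfl : E = coordPlane n σ := hE
  subst hμ
  have hn0 : 0 < n := by omega
  set v := (volume (ball (0 : Euc n) 1)).toReal
  have hv : 0 < v := ENNReal.toReal_pos (measure_ball_pos _ _ one_pos).ne' measure_ball_lt_top.ne
  refine ⟨2 ^ ((σ : ℝ) - n + α) / (√n ^ σ * v ^ (1 - α / n)), by positivity,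
    fun x hx hd0 hd => ?_⟩
  obtain ⟨y, hy, hxy⟩ :=
    isClosed_coordPlane.exists_infDist_eq_dist ⟨0, zero_mem_coordPlane⟩ x
  set d := infDist x (coordPlane n σ)
  have hball : ball y d ⊆ ball x (2 * d) ∩ ball 0 2 := by
    intro z hz
    rw [mem_ball] at hz
    rw [mem_ball_zero_iff] at hx
    refine ⟨mem_ball.2 (by linarith [dist_triangle z y x, dist_comm x y]),
      mem_ball_zero_iff.2 ?_⟩
    linarith [norm_le_norm_add_norm_sub' z x, dist_eq_norm z x, dist_triangle z y x, dist_comm x y]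
  have hμ : ENNReal.ofReal ((√n)⁻¹ ^ σ * (2 * d) ^ (σ : ℝ)) ≤
      μH[σ].restrict (coordPlane n σ ∩ ball 0 2) (ball x (2 * d)) := calc
    _ = ENNReal.ofReal ((2 * (d / √n)) ^ σ) := by rw [Real.rpow_natCast]; ring_nf
    _ ≤ μH[σ] (coordPlane n σ ∩ ball y d) :=
        ofReal_le_hausdorffMeasure_coordPlane_inter_ball (by omega) hn0 hy hd0
    _ ≤ _ := by
        rw [Measure.restrict_apply measurableSet_ball]
        exact measure_mono fun z hz => ⟨(hball hz.2).1, hz.1, (hball hz.2).2⟩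
  have ha : (√n)⁻¹ ^ σ ≤ 1 :=
    pow_le_one₀ (by positivity)
      (inv_le_one_of_one_le₀ (Real.one_le_sqrt.2 (Nat.one_le_cast.2 hn0)))
  convert ofReal_le_cappedFracMaximal (D := 4) hn0 ⟨by positivity, by linarith⟩ ha hμ using 2
  change _ = _ / v ^ (1 - α / n)
  rw [Real.mul_rpow zero_le_two hd0.le]
  field_simp
  rw [← mul_pow, mul_one_div_cancel (by positivity), one_pow]

/-- lower bound for the capped fractional maximal function of the
`σ`-dimensional Hausdorff measure on a `σ`-plane, in terms of the distance to the plane. -/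
theorem cappedFracMaximal_lower_bound
    (n : ℕ) (hn : 2 ≤ n) (σ : ℕ) (hσ1 : 1 ≤ σ) (hσn : σ ≤ n - 1)
    (α : ℝ) (hα : α ∈ Set.Ioo (0 : ℝ) ((n : ℝ) - σ))
    (E : Set (Euc n)) (hE : E = {x : Euc n | ∀ i : Fin n, σ ≤ (i : ℕ) → x i = 0})
    (μ : Measure (Euc n)) (hμ : μ = (μH[(σ : ℝ)]).restrict (E ∩ ball 0 2)) :
    ∃ c : ℝ, 0 < c ∧
      ∀ x ∈ ball (0 : Euc n) 1, 0 < infDist x E → infDist x E ≤ 1 / 2 →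
        ENNReal.ofReal (c * infDist x E ^ ((σ : ℝ) - n + α)) ≤
          cappedFracMaximal 4 μ σ α x :=
  cappedFracMaximal_lower_bound_general n hn σ hσn α E hE μ hμ
end
end
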